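/- arXiv:1704.00666 — 2 statements merged into one kernel-verified Lean document; each statement's English description precedes it below -/
import Mathlib

section
/- Under unconfoundedness of the control outcome (Y(0) ⫫ A ∣ X) and e(X) < 1 a.s. with P(A=1) > 0, the average treatment effect on the treated satisfies τ_ATT = E[Y(1) − Y(0) ∣ A = 1] = ( E[AY] − E[(1−A)·Y·e(X)/(1−e(X))] ) / E[e(X)]. -/
open MeasureTheory Filter ProbabilityTheory

/-!
Conditional independence of `Y(0)` and `A` given `X` means that conditioning additionally on
`Y(0)` does not change the propensity score: `E[A | X, Y(0)] = e(X)`. As `Y(0)` and `e(X)` are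
measurable for that σ-algebra, pulling them out gives
`E[A Y(0)] = E[e Y(0)] = E[(1 - A) Y(0) e / (1 - e)]`, so the weighted control mean recovers the
treated mean of `Y(0)`. Together with `A Y = A Y(1)` and `E[e] = E[A] = P(A = 1)` this is the
identification formula.
-/

section

variable {Ω : Type*} {m m₁ : MeasurableSpace Ω} {mΩ : MeasurableSpace Ω} {μ : Measure Ω}

lemma sup_eq_generateFrom_image2_inter :
    m ⊔ m₁ = MeasurableSpace.generateFrom
      (Set.image2 (· ∩ ·) {s | MeasurableSet[m] s} {u | MeasurableSet[m₁] u}) := by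
  refine le_antisymm (sup_le ?_ ?_) (MeasurableSpace.generateFrom_le ?_)
  · exact fun s hs ↦ MeasurableSpace.measurableSet_generateFrom
      ⟨s, hs, Set.univ, MeasurableSet.univ, Set.inter_univ s⟩
  · exact fun u hu ↦ MeasurableSpace.measurableSet_generateFrom
      ⟨Set.univ, MeasurableSet.univ, u, hu, Set.univ_inter u⟩
  · rintro _ ⟨s, hs, u, hu, rfl⟩
    exact (le_sup_left (b := m₁) s hs).inter (le_sup_right (a := m) u hu)

lemma isPiSystem_image2_inter :
    IsPiSystem (Set.image2 (· ∩ ·) {s | MeasurableSet[m] s} {u | MeasurableSet[m₁] u}) := by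
  rintro _ ⟨s₁, hs₁, u₁, hu₁, rfl⟩ _ ⟨s₂, hs₂, u₂, hu₂, rfl⟩ -
  exact ⟨s₁ ∩ s₂, hs₁.inter hs₂, u₁ ∩ u₂, hu₁.inter hu₂, Set.inter_inter_inter_comm _ _ _ _⟩

lemma setIntegral_eq_of_forall_inter {E : Type*} [NormedAddCommGroup E] [NormedSpace ℝ E]
    (hm : m ≤ mΩ) (hm₁ : m₁ ≤ mΩ) {f g : Ω → E}
    (hf : Integrable f μ) (hg : Integrable g μ)
    (h : ∀ s u, MeasurableSet[m] s → MeasurableSet[m₁] u →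
      ∫ ω in s ∩ u, f ω ∂μ = ∫ ω in s ∩ u, g ω ∂μ)
    {t : Set Ω} (ht : MeasurableSet[m ⊔ m₁] t) :
    ∫ ω in t, f ω ∂μ = ∫ ω in t, g ω ∂μ := by
  have hle : m ⊔ m₁ ≤ mΩ := sup_le hm hm₁
  induction t, ht using MeasurableSpace.induction_on_inter
    sup_eq_generateFrom_image2_inter isPiSystem_image2_inter with
  | empty => simp
  | basic t ht =>
    obtain ⟨s, hs, u, hu, rfl⟩ := ht
    exact h s u hs hu
  | compl t htm ht =>
    have h_univ := h Set.univ Set.univ MeasurableSet.univ MeasurableSet.univ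
    rw [Set.inter_univ, setIntegral_univ, setIntegral_univ] at h_univ
    rw [setIntegral_compl (hle t htm) hf, setIntegral_compl (hle t htm) hg, h_univ, ht]
  | iUnion t hdisj htm ht =>
    rw [integral_iUnion (fun i ↦ hle _ (htm i)) hdisj hf.integrableOn,
      integral_iUnion (fun i ↦ hle _ (htm i)) hdisj hg.integrableOn]
    exact tsum_congr ht

lemma setIntegral_inter_eq_setIntegral_condExp_indicator [IsFiniteMeasure μ] (hm : m ≤ mΩ)
    {f : Ω → ℝ} (hf : Integrable f μ) {s u : Set Ω} (hs : MeasurableSet[m] s)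
    (hu : MeasurableSet u) :
    ∫ ω in s ∩ u, f ω ∂μ = ∫ ω in s, μ[u.indicator f | m] ω ∂μ := by
  rw [setIntegral_condExp hm (hf.indicator hu) hs, setIntegral_indicator hu]

lemma integral_mul_eq_of_condExp_ae_eq [IsFiniteMeasure μ] (hm : m ≤ mΩ) {f g h : Ω → ℝ}
    (hg : StronglyMeasurable[m] g) (hgf : Integrable (fun ω ↦ g ω * f ω) μ)
    (hf : Integrable f μ) (hfh : μ[f | m] =ᵐ[μ] h) :
    ∫ ω, g ω * f ω ∂μ = ∫ ω, g ω * h ω ∂μ := by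
  calc ∫ ω, g ω * f ω ∂μ = ∫ ω, μ[g * f | m] ω ∂μ := (integral_condExp hm).symm
    _ = ∫ ω, g ω * h ω ∂μ := by
      refine integral_congr_ae ?_
      filter_upwards [condExp_mul_of_stronglyMeasurable_left hg hgf hf, hfh] with ω h_pull h_f
      rw [h_pull, Pi.mul_apply, h_f]

lemma integral_mul_eq_integral_odds_mul_of_stronglyMeasurable [IsFiniteMeasure μ]
    (hm : m ≤ mΩ) {A Z e : Ω → ℝ} (hZ : StronglyMeasurable[m] Z) (he : StronglyMeasurable[m] e)
    (hAe : μ[A | m] =ᵐ[μ] e)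
    (he1 : ∀ᵐ ω ∂μ, e ω ≠ 1) (hA : Integrable A μ) (hAZ : Integrable (fun ω ↦ A ω * Z ω) μ)
    (hw : Integrable (fun ω ↦ (1 - A ω) * Z ω * e ω / (1 - e ω)) μ) :
    ∫ ω, A ω * Z ω ∂μ = ∫ ω, (1 - A ω) * Z ω * e ω / (1 - e ω) ∂μ := by
  have h_untreated : μ[fun ω ↦ 1 - A ω | m] =ᵐ[μ] fun ω ↦ 1 - e ω := by
    change μ[(fun _ ↦ (1 : ℝ)) - A | m] =ᵐ[μ] _
    filter_upwards [condExp_sub (m := m) (integrable_const 1) hA, hAe] with ω h_sub h_A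
    rw [h_sub, Pi.sub_apply, condExp_const hm, h_A]
  calc ∫ ω, A ω * Z ω ∂μ = ∫ ω, Z ω * A ω ∂μ := by simp_rw [mul_comm]
    _ = ∫ ω, Z ω * e ω ∂μ :=
        integral_mul_eq_of_condExp_ae_eq hm hZ (by simpa only [mul_comm] using hAZ) hA hAe
    _ = ∫ ω, Z ω * e ω / (1 - e ω) * (1 - e ω) ∂μ := by
        refine integral_congr_ae (he1.mono fun ω hω ↦ ?_)
        exact (div_mul_cancel₀ _ (sub_ne_zero.mpr hω.symm)).symm
    _ = ∫ ω, Z ω * e ω / (1 - e ω) * (1 - A ω) ∂μ := by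
        refine (integral_mul_eq_of_condExp_ae_eq (g := fun ω ↦ Z ω * e ω / (1 - e ω))
          (f := fun ω ↦ 1 - A ω) hm ((hZ.mul he).div
          (stronglyMeasurable_const.sub he)) ?_ ((integrable_const 1).sub hA) h_untreated).symm
        exact hw.congr (ae_of_all _ fun ω ↦ by ring)
    _ = ∫ ω, (1 - A ω) * Z ω * e ω / (1 - e ω) ∂μ := by
        congr 1 with ω
        ring

end

lemma indicator_setOf_eq_one_eq_self {Ω : Type*} {A : Ω → ℝ}
    (hA01 : ∀ ω, A ω = 0 ∨ A ω = 1) : {ω | A ω = 1}.indicator 1 = A := by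
  ext ω
  rcases hA01 ω with h | h <;> simp [h]

section

variable {Ω : Type*} [MeasurableSpace Ω] {μ : Measure Ω} {A : Ω → ℝ}

lemma integrable_of_forall_eq_zero_or_one [IsFiniteMeasure μ] (hA : Measurable A)
    (hA01 : ∀ ω, A ω = 0 ∨ A ω = 1) : Integrable A μ :=
  indicator_setOf_eq_one_eq_self hA01 ▸
    (integrable_const 1).indicator (hA (measurableSet_singleton 1))

lemma integral_eq_measureReal_setOf_eq_one (hA : Measurable A)
    (hA01 : ∀ ω, A ω = 0 ∨ A ω = 1) : ∫ ω, A ω ∂μ = μ.real {ω | A ω = 1} := by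
  conv_lhs => rw [← indicator_setOf_eq_one_eq_self hA01]
  exact integral_indicator_one (hA (measurableSet_singleton 1))

lemma integral_mul_eq_setIntegral (hA : Measurable A) (hA01 : ∀ ω, A ω = 0 ∨ A ω = 1)
    (f : Ω → ℝ) : ∫ ω, A ω * f ω ∂μ = ∫ ω in {ω | A ω = 1}, f ω ∂μ := by
  have hS : MeasurableSet {ω | A ω = 1} := hA (measurableSet_singleton 1)
  rw [← integral_indicator hS]
  congr 1 with ω
  rcases hA01 ω with h | h <;> simp [h]

end

section

variable {Ω : Type*} {m m₁ m₂ : MeasurableSpace Ω} {mΩ : MeasurableSpace Ω}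
  [StandardBorelSpace Ω] {μ : Measure Ω} [IsFiniteMeasure μ]

lemma ProbabilityTheory.CondIndepFun.congr_left {β β' : Type*} [MeasurableSpace β]
    [MeasurableSpace β'] {hm : m ≤ mΩ} {f f' : Ω → β} {g : Ω → β'}
    (h : CondIndepFun m hm f g μ) (hff' : f =ᵐ[μ] f') : CondIndepFun m hm f' g μ := by
  refine Kernel.IndepFun.congr' h ?_ (ae_of_all _ fun _ ↦ EventuallyEq.rfl)
  have h_comp : ∀ᵐ ω ∂(condExpKernel μ m ∘ₘ μ.trim hm), f ω = f' ω := by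
    rwa [condExpKernel_comp_trim]
  exact Measure.ae_ae_of_ae_comp h_comp

lemma condExp_indicator_sup_ae_eq_of_condIndep (hm : m ≤ mΩ) (hm₁ : m₁ ≤ mΩ) (hm₂ : m₂ ≤ mΩ)
    (h : CondIndep m m₁ m₂ hm μ) {t : Set Ω} (ht : MeasurableSet[m₂] t) :
    μ⟦t | m ⊔ m₁⟧ =ᵐ[μ] μ⟦t | m⟧ := by
  have h_mul := (condIndep_iff m m₁ m₂ hm hm₁ hm₂ μ).mp h
  have h_ind : Integrable (t.indicator fun _ ↦ (1 : ℝ)) μ :=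
    (integrable_const 1).indicator (hm₂ t ht)
  refine (ae_eq_condExp_of_forall_setIntegral_eq (sup_le hm hm₁) h_ind
    (fun _ _ _ ↦ integrable_condExp.integrableOn) (fun v hv _ ↦ ?_)
    (stronglyMeasurable_condExp.mono (le_sup_left : m ≤ m ⊔ m₁)).aestronglyMeasurable).symm
  refine setIntegral_eq_of_forall_inter hm hm₁ integrable_condExp h_ind (fun s u hs hu ↦ ?_) hv
  have hu' : MeasurableSet u := hm₁ u hu
  -- both sides are `∫ ω in s, μ⟦u | m⟧ ω * μ⟦t | m⟧ ω ∂μ`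
  have h_pull : μ[u.indicator (μ⟦t | m⟧) | m] =ᵐ[μ] μ⟦t | m⟧ * μ⟦u | m⟧ := by
    have : u.indicator (μ⟦t | m⟧) = μ⟦t | m⟧ * u.indicator fun _ ↦ (1 : ℝ) := by
      ext ω; by_cases hω : ω ∈ u <;> simp [hω]
    rw [this]
    exact condExp_mul_of_stronglyMeasurable_left stronglyMeasurable_condExp
      (this ▸ integrable_condExp.indicator hu') ((integrable_const 1).indicator hu')
  rw [setIntegral_inter_eq_setIntegral_condExp_indicator hm integrable_condExp hs hu',
    setIntegral_inter_eq_setIntegral_condExp_indicator hm h_ind hs hu',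
    Set.indicator_indicator]
  refine setIntegral_congr_ae (hm s hs) ?_
  filter_upwards [h_pull, h_mul u t hu ht] with ω h_pull_ω h_mul_ω _
  rw [h_pull_ω, h_mul_ω, Pi.mul_apply, Pi.mul_apply, mul_comm]

lemma condExp_sup_comap_ae_eq_of_condIndepFun {β : Type*} [MeasurableSpace β] (hm : m ≤ mΩ)
    {Z : Ω → β} {A : Ω → ℝ} (hZ : Measurable Z) (hA : Measurable A)
    (hA01 : ∀ ω, A ω = 0 ∨ A ω = 1) (h : CondIndepFun m hm Z A μ) :
    μ[A | m ⊔ MeasurableSpace.comap Z inferInstance] =ᵐ[μ] μ[A | m] := by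
  rw [← indicator_setOf_eq_one_eq_self hA01]
  exact condExp_indicator_sup_ae_eq_of_condIndep hm hZ.comap_le hA.comap_le
    ((condIndepFun_iff_condIndep m hm Z A μ).mp h) ⟨{1}, measurableSet_singleton 1, rfl⟩

lemma integral_mul_eq_integral_odds_mul_of_condIndepFun (hm : m ≤ mΩ) {A Y e : Ω → ℝ}
    (hA : Measurable A) (hA01 : ∀ ω, A ω = 0 ∨ A ω = 1) (hY : Integrable Y μ)
    (h : CondIndepFun m hm Y A μ) (he : StronglyMeasurable[m] e) (hAe : μ[A | m] =ᵐ[μ] e)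
    (he1 : ∀ᵐ ω ∂μ, e ω ≠ 1) (hw : Integrable (fun ω ↦ (1 - A ω) * Y ω * e ω / (1 - e ω)) μ) :
    ∫ ω, A ω * Y ω ∂μ = ∫ ω, (1 - A ω) * Y ω * e ω / (1 - e ω) ∂μ := by
  -- `Y` is only a.e. measurable, so `σ(Y)` need not lie below `mΩ`: use a measurable version.
  obtain ⟨Y', hY'm, hYY'⟩ := hY.aemeasurable
  have h_odds : (fun ω ↦ (1 - A ω) * Y ω * e ω / (1 - e ω))
      =ᵐ[μ] fun ω ↦ (1 - A ω) * Y' ω * e ω / (1 - e ω) :=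
    hYY'.mono fun _ h ↦ by simp only [h]
  rw [integral_congr_ae (hYY'.mono fun _ h ↦ by rw [h]), integral_congr_ae h_odds]
  refine integral_mul_eq_integral_odds_mul_of_stronglyMeasurable (sup_le hm hY'm.comap_le)
    ((comap_measurable Y').stronglyMeasurable.mono le_sup_right) (he.mono le_sup_left)
    ((condExp_sup_comap_ae_eq_of_condIndepFun hm hY'm hA hA01 (h.congr_left hYY')).trans hAe)
    he1 (integrable_of_forall_eq_zero_or_one hA hA01) ?_ (hw.congr h_odds)
  refine (hY.congr hYY').bdd_mul (c := 1) hA.aestronglyMeasurable (ae_of_all _ fun ω ↦ ?_)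
  rcases hA01 ω with h | h <;> simp [h]

end

theorem att_identification_general {Ω : Type*} [mΩ : MeasurableSpace Ω] [StandardBorelSpace Ω]
    (μ : Measure Ω) [IsProbabilityMeasure μ]
    (X : Ω → ℝ)
    (A Y1 Y0 e : Ω → ℝ)
    (hA : Measurable A) (hA01 : ∀ ω, A ω = 0 ∨ A ω = 1)
    (hY1 : Integrable Y1 μ) (hY0 : Integrable Y0 μ)
    (hmX : MeasurableSpace.comap X inferInstance ≤ mΩ)
    (hunconf0 : CondIndepFun (MeasurableSpace.comap X inferInstance) hmX Y0 A μ)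
    (he : StronglyMeasurable[MeasurableSpace.comap X inferInstance] e)
    (heB : ∀ᵐ ω ∂μ, 0 < e ω ∧ e ω < 1)
    (hcondA : μ[A|MeasurableSpace.comap X inferInstance] =ᵐ[μ] e)
    (hint : Integrable (fun ω =>
      (1 - A ω) * (A ω * Y1 ω + (1 - A ω) * Y0 ω) * e ω / (1 - e ω)) μ) :
    (∫ ω in {ω | A ω = 1}, (Y1 ω - Y0 ω) ∂μ) / (μ {ω | A ω = 1}).toReal =
      ((∫ ω, A ω * (A ω * Y1 ω + (1 - A ω) * Y0 ω) ∂μ) -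
          ∫ ω, (1 - A ω) * (A ω * Y1 ω + (1 - A ω) * Y0 ω) * e ω / (1 - e ω) ∂μ) /
        (∫ ω, e ω ∂μ) := by
  have h_observed : ∀ ω, A ω * (A ω * Y1 ω + (1 - A ω) * Y0 ω) = A ω * Y1 ω ∧
      (1 - A ω) * (A ω * Y1 ω + (1 - A ω) * Y0 ω) = (1 - A ω) * Y0 ω := by
    intro ω
    rcases hA01 ω with h | h <;> simp [h]
  simp_rw [h_observed]
  have h_propensity : ∫ ω, e ω ∂μ = (μ {ω | A ω = 1}).toReal := by
    rw [← integral_congr_ae hcondA, integral_condExp hmX,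
      integral_eq_measureReal_setOf_eq_one hA hA01, measureReal_def]
  rw [integral_sub hY1.integrableOn hY0.integrableOn, ← integral_mul_eq_setIntegral hA hA01 Y1,
    ← integral_mul_eq_setIntegral hA hA01 Y0, h_propensity,
    integral_mul_eq_integral_odds_mul_of_condIndepFun hmX hA hA01 hY0 hunconf0 he hcondA
      (heB.mono fun _ h ↦ h.2.ne) (by simpa only [h_observed] using hint)]

theorem att_identification {Ω : Type*} [mΩ : MeasurableSpace Ω] [StandardBorelSpace Ω]
    (μ : Measure Ω) [IsProbabilityMeasure μ]
    (X : Ω → ℝ) (hX : Measurable X)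
    (A Y1 Y0 e : Ω → ℝ)
    (hA : Measurable A) (hA01 : ∀ ω, A ω = 0 ∨ A ω = 1)
    (hY1 : Integrable Y1 μ) (hY0 : Integrable Y0 μ)
    (hmX : MeasurableSpace.comap X inferInstance ≤ mΩ)
    (hunconf0 : CondIndepFun (MeasurableSpace.comap X inferInstance) hmX Y0 A μ)
    (he : StronglyMeasurable[MeasurableSpace.comap X inferInstance] e)
    (heB : ∀ᵐ ω ∂μ, 0 < e ω ∧ e ω < 1)
    (hcondA : μ[A|MeasurableSpace.comap X inferInstance] =ᵐ[μ] e)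
    (hAprob : 0 < μ {ω | A ω = 1})
    (hint : Integrable (fun ω =>
      (1 - A ω) * (A ω * Y1 ω + (1 - A ω) * Y0 ω) * e ω / (1 - e ω)) μ) :
    (∫ ω in {ω | A ω = 1}, (Y1 ω - Y0 ω) ∂μ) / (μ {ω | A ω = 1}).toReal =
      ((∫ ω, A ω * (A ω * Y1 ω + (1 - A ω) * Y0 ω) ∂μ) -
          ∫ ω, (1 - A ω) * (A ω * Y1 ω + (1 - A ω) * Y0 ω) * e ω / (1 - e ω) ∂μ) /
        (∫ ω, e ω ∂μ) :=
  att_identification_general (mΩ := mΩ) μ X A Y1 Y0 e hA hA01 hY1 hY0 hmX hunconf0 he heB hcondA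
    hint
end

section
/- Under unconfoundedness and strict overlap, with Y square-integrable, the residualized conditional variance satisfies Var( A R̃/e(X) − (1−A) R̃/(1−e(X)) ∣ X ) ≤ Var( A Y/e(X) − (1−A) Y/(1−e(X)) ∣ X ), where R̃ = Y − μ(A,X) and μ(a,X) = E[Y ∣ A=a, X]; the difference equals [((1−e(X))/e(X))^{1/2} μ(1,X) + (e(X)/(1−e(X)))^{1/2} μ(0,X)]² ≥ 0. -/
open MeasureTheory Filter

private lemma l2_mul_int {Ω : Type*} {m0 : MeasurableSpace Ω} {μ : Measure Ω}
    {f g : Ω → ℝ} (hf : MemLp f 2 μ) (hg : MemLp g 2 μ) :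
    Integrable (fun ω => f ω * g ω) μ := by
  have h2 : Integrable (fun ω => (f ω ^ 2 + g ω ^ 2) / 2) μ :=
    (hf.integrable_sq.add hg.integrable_sq).div_const 2
  refine h2.mono' (hf.aestronglyMeasurable.mul hg.aestronglyMeasurable) ?_
  filter_upwards with ω
  rw [Real.norm_eq_abs, abs_mul]
  nlinarith [sq_nonneg (|f ω| - |g ω|), sq_abs (f ω), sq_abs (g ω),
    abs_nonneg (f ω), abs_nonneg (g ω)]

private lemma bdd_mul_l2 {Ω : Type*} {m0 : MeasurableSpace Ω} {μ : Measure Ω}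
    {f b : Ω → ℝ} (hf : MemLp f 2 μ) (hb : AEStronglyMeasurable b μ)
    (h1 : ∀ ω, |b ω| ≤ 1) :
    MemLp (fun ω => b ω * f ω) 2 μ := by
  refine hf.norm.mono' (hb.mul hf.aestronglyMeasurable) ?_
  filter_upwards with ω
  rw [Real.norm_eq_abs, abs_mul]
  exact mul_le_of_le_one_left (abs_nonneg _) (h1 ω)

private lemma pullout {Ω : Type*} {m0 : MeasurableSpace Ω} {μ : Measure Ω}
    {G : MeasurableSpace Ω} (g f h : Ω → ℝ) (hg : StronglyMeasurable[G] g)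
    (hgf : Integrable (fun ω => g ω * f ω) μ) (hf : Integrable f μ)
    (hfh : μ[f|G] =ᵐ[μ] h) :
    μ[(fun ω => g ω * f ω)|G] =ᵐ[μ] fun ω => g ω * h ω := by
  have h1 : μ[(fun ω => g ω * f ω)|G] =ᵐ[μ] fun ω => g ω * (μ[f|G]) ω :=
    condExp_mul_of_stronglyMeasurable_left hg hgf hf
  filter_upwards [h1, hfh] with ω h1ω h2ω
  rw [h1ω, h2ω]

theorem augmented_variance_reduction {Ω : Type*} (G : MeasurableSpace Ω) {m0 : MeasurableSpace Ω} (μ : Measure Ω)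
    [IsProbabilityMeasure μ] (hG : G ≤ m0)
    (A e μ1 μ0 Y : Ω → ℝ)
    (hA01 : ∀ ω, A ω = 0 ∨ A ω = 1) (hAmeas : Measurable A)
    (he : StronglyMeasurable[G] e) (hμ1 : StronglyMeasurable[G] μ1)
    (hμ0 : StronglyMeasurable[G] μ0)
    (heB : ∀ᵐ ω ∂μ, 0 < e ω ∧ e ω < 1)
    (hY2 : MemLp Y 2 μ)
    (hcondA : μ[A|G] =ᵐ[μ] e)
    (hmean1 : μ[(fun ω => A ω * Y ω)|G] =ᵐ[μ] fun ω => e ω * μ1 ω)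
    (hmean0 : μ[(fun ω => (1 - A ω) * Y ω)|G] =ᵐ[μ] fun ω => (1 - e ω) * μ0 ω)
    (DY DR : Ω → ℝ)
    (hDY : DY = fun ω => A ω * Y ω / e ω - (1 - A ω) * Y ω / (1 - e ω))
    (hDR : DR = fun ω =>
      A ω * (Y ω - (A ω * μ1 ω + (1 - A ω) * μ0 ω)) / e ω -
        (1 - A ω) * (Y ω - (A ω * μ1 ω + (1 - A ω) * μ0 ω)) / (1 - e ω))
    (hDY2 : MemLp DY 2 μ) (hDR2 : MemLp DR 2 μ) :
    ∀ᵐ ω ∂μ,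
      ((μ[(fun ω' => DY ω' ^ 2)|G]) ω - ((μ[DY|G]) ω) ^ 2) -
          ((μ[(fun ω' => DR ω' ^ 2)|G]) ω - ((μ[DR|G]) ω) ^ 2) =
        (Real.sqrt ((1 - e ω) / e ω) * μ1 ω +
            Real.sqrt (e ω / (1 - e ω)) * μ0 ω) ^ 2 ∧
      (μ[(fun ω' => DR ω' ^ 2)|G]) ω - ((μ[DR|G]) ω) ^ 2 ≤
        (μ[(fun ω' => DY ω' ^ 2)|G]) ω - ((μ[DY|G]) ω) ^ 2 := by
  -- boundedness of A
  have habd : ∀ ω, |A ω| ≤ 1 := fun ω => by rcases hA01 ω with h | h <;> simp [h]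
  have h1abd : ∀ ω, |1 - A ω| ≤ 1 := fun ω => by rcases hA01 ω with h | h <;> simp [h]
  have habd' : ∀ ω, ‖A ω‖ ≤ 1 := fun ω => by rw [Real.norm_eq_abs]; exact habd ω
  have h1abd' : ∀ ω, ‖1 - A ω‖ ≤ 1 := fun ω => by rw [Real.norm_eq_abs]; exact h1abd ω
  have hAm : Measurable[m0] A := hAmeas
  have hAaes : AEStronglyMeasurable[m0] A μ := hAm.aestronglyMeasurable
  have h1Aaes : AEStronglyMeasurable[m0] (fun ω => 1 - A ω) μ :=
    (measurable_const.sub hAm).aestronglyMeasurable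
  -- basic integrability
  have hYint : Integrable Y μ := hY2.integrable one_le_two
  have hDYint : Integrable DY μ := hDY2.integrable one_le_two
  have hAY : Integrable (fun ω => A ω * Y ω) μ :=
    hYint.bdd_mul hAaes (Eventually.of_forall habd')
  have h1AY : Integrable (fun ω => (1 - A ω) * Y ω) μ :=
    hYint.bdd_mul h1Aaes (Eventually.of_forall h1abd')
  have hAint : Integrable A μ := by
    have := (integrable_const (1 : ℝ)).bdd_mul hAaes (Eventually.of_forall habd')
    simpa using this
  have h1Aint : Integrable (fun ω => 1 - A ω) μ := (integrable_const 1).sub hAint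
  -- L² memberships
  have hC2 : MemLp (fun ω => DY ω - DR ω) 2 μ := hDY2.sub hDR2
  have hAC2 : MemLp (fun ω => A ω * (DY ω - DR ω)) 2 μ := bdd_mul_l2 hC2 hAaes habd
  have h1AC2 : MemLp (fun ω => (1 - A ω) * (DY ω - DR ω)) 2 μ := bdd_mul_l2 hC2 h1Aaes h1abd
  have hADY2 : MemLp (fun ω => A ω * DY ω) 2 μ := bdd_mul_l2 hDY2 hAaes habd
  have h1ADY2 : MemLp (fun ω => (1 - A ω) * DY ω) 2 μ := bdd_mul_l2 hDY2 h1Aaes h1abd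
  -- G-measurable factors
  have me : Measurable[G] e := he.measurable
  have m1 : Measurable[G] μ1 := hμ1.measurable
  have m0' : Measurable[G] μ0 := hμ0.measurable
  -- integrability of the various products
  have IF1 : Integrable (fun ω => (e ω)⁻¹ * (A ω * Y ω)) μ := by
    refine (hDYint.bdd_mul hAaes (Eventually.of_forall habd')).congr (Eventually.of_forall fun ω => ?_)
    rcases hA01 ω with h | h <;> simp only [hDY, h] <;> ring
  have IF0 : Integrable (fun ω => (1 - e ω)⁻¹ * ((1 - A ω) * Y ω)) μ := by
    refine ((hDYint.bdd_mul h1Aaes (Eventually.of_forall h1abd')).neg).congr (Eventually.of_forall fun ω => ?_)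
    rcases hA01 ω with h | h <;> simp only [hDY, h, Pi.neg_apply] <;> ring
  have intC1 : Integrable (fun ω => μ1 ω * (e ω)⁻¹ * A ω) μ := by
    refine (hAC2.integrable one_le_two).congr (Eventually.of_forall fun ω => ?_)
    rcases hA01 ω with h | h <;> simp only [hDY, hDR, h, ← inv_pow] <;> ring
  have intC0 : Integrable (fun ω => μ0 ω * (1 - e ω)⁻¹ * (1 - A ω)) μ := by
    refine ((h1AC2.integrable one_le_two).neg).congr (Eventually.of_forall fun ω => ?_)
    rcases hA01 ω with h | h <;> simp only [hDY, hDR, h, Pi.neg_apply] <;> ring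
  have int1 : Integrable (fun ω => 2 * μ1 ω * (e ω ^ 2)⁻¹ * (A ω * Y ω)) μ := by
    refine ((l2_mul_int hAC2 hADY2).const_mul 2).congr (Eventually.of_forall fun ω => ?_)
    rcases hA01 ω with h | h <;> simp only [hDY, hDR, h, ← inv_pow] <;> ring
  have int2 : Integrable (fun ω => μ1 ω ^ 2 * (e ω ^ 2)⁻¹ * A ω) μ := by
    refine hAC2.integrable_sq.congr (Eventually.of_forall fun ω => ?_)
    rcases hA01 ω with h | h <;> simp only [hDY, hDR, h, ← inv_pow] <;> ring
  have int3 : Integrable (fun ω => 2 * μ0 ω * ((1 - e ω) ^ 2)⁻¹ * ((1 - A ω) * Y ω)) μ := by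
    refine ((l2_mul_int h1AC2 h1ADY2).const_mul 2).congr (Eventually.of_forall fun ω => ?_)
    rcases hA01 ω with h | h <;> simp only [hDY, hDR, h, ← inv_pow] <;> ring
  have int4 : Integrable (fun ω => μ0 ω ^ 2 * ((1 - e ω) ^ 2)⁻¹ * (1 - A ω)) μ := by
    refine h1AC2.integrable_sq.congr (Eventually.of_forall fun ω => ?_)
    rcases hA01 ω with h | h <;> simp only [hDY, hDR, h, ← inv_pow] <;> ring
  -- conditional expectation of 1 - A
  have hc1A : μ[(fun ω => 1 - A ω)|G] =ᵐ[μ] fun ω => 1 - e ω := by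
    have h : μ[(fun ω => 1 - A ω)|G] =ᵐ[μ] μ[(fun _ : Ω => (1:ℝ))|G] - μ[A|G] :=
      condExp_sub (integrable_const 1) hAint G
    filter_upwards [h, hcondA] with ω hω hA
    rw [hω, Pi.sub_apply, condExp_const hG, hA]
  -- conditional expectation of DY
  have hEDY : ∀ᵐ ω ∂μ, (μ[DY|G]) ω = μ1 ω - μ0 ω := by
    have h0 : μ[DY|G] =ᵐ[μ]
        μ[(fun ω => (e ω)⁻¹ * (A ω * Y ω) - (1 - e ω)⁻¹ * ((1 - A ω) * Y ω))|G] :=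
      condExp_congr_ae (Eventually.of_forall fun ω => by
        rcases hA01 ω with h | h <;> simp only [hDY, h] <;> ring)
    have hsplit : μ[(fun ω => (e ω)⁻¹ * (A ω * Y ω) - (1 - e ω)⁻¹ * ((1 - A ω) * Y ω))|G]
        =ᵐ[μ] μ[(fun ω => (e ω)⁻¹ * (A ω * Y ω))|G]
          - μ[(fun ω => (1 - e ω)⁻¹ * ((1 - A ω) * Y ω))|G] :=
      condExp_sub IF1 IF0 G
    have hF1 := pullout (μ := μ) (fun ω => (e ω)⁻¹) (fun ω => A ω * Y ω) _
      me.inv.stronglyMeasurable IF1 hAY hmean1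
    have hF0 := pullout (μ := μ) (fun ω => (1 - e ω)⁻¹) (fun ω => (1 - A ω) * Y ω) _
      (measurable_const.sub me).inv.stronglyMeasurable IF0 h1AY hmean0
    filter_upwards [heB, h0, hsplit, hF1, hF0] with ω hB hω hs f1 f0
    have he0 : e ω ≠ 0 := ne_of_gt hB.1
    have he1 : (1 : ℝ) - e ω ≠ 0 := ne_of_gt (by linarith [hB.2])
    rw [hω, hs, Pi.sub_apply, f1, f0, inv_mul_cancel_left₀ he0, inv_mul_cancel_left₀ he1]
  -- conditional expectation of DR
  have hEDR : ∀ᵐ ω ∂μ, (μ[DR|G]) ω = 0 := by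
    have h0 : μ[DR|G] =ᵐ[μ]
        μ[(fun ω => DY ω - (μ1 ω * (e ω)⁻¹ * A ω - μ0 ω * (1 - e ω)⁻¹ * (1 - A ω)))|G] :=
      condExp_congr_ae (Eventually.of_forall fun ω => by
        rcases hA01 ω with h | h <;> simp only [hDY, hDR, h, ← inv_pow] <;> ring)
    have hCint : Integrable
        (fun ω => μ1 ω * (e ω)⁻¹ * A ω - μ0 ω * (1 - e ω)⁻¹ * (1 - A ω)) μ :=
      intC1.sub intC0
    have hsplit : μ[(fun ω => DY ω - (μ1 ω * (e ω)⁻¹ * A ω - μ0 ω * (1 - e ω)⁻¹ * (1 - A ω)))|G]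
        =ᵐ[μ] μ[DY|G]
          - μ[(fun ω => μ1 ω * (e ω)⁻¹ * A ω - μ0 ω * (1 - e ω)⁻¹ * (1 - A ω))|G] :=
      condExp_sub hDYint hCint G
    have hsplit2 : μ[(fun ω => μ1 ω * (e ω)⁻¹ * A ω - μ0 ω * (1 - e ω)⁻¹ * (1 - A ω))|G]
        =ᵐ[μ] μ[(fun ω => μ1 ω * (e ω)⁻¹ * A ω)|G]
          - μ[(fun ω => μ0 ω * (1 - e ω)⁻¹ * (1 - A ω))|G] :=
      condExp_sub intC1 intC0 G
    have hC1 := pullout (μ := μ) (fun ω => μ1 ω * (e ω)⁻¹) A _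
      (m1.mul me.inv).stronglyMeasurable intC1 hAint hcondA
    have hC0 := pullout (μ := μ) (fun ω => μ0 ω * (1 - e ω)⁻¹) (fun ω => 1 - A ω) _
      (m0'.mul (measurable_const.sub me).inv).stronglyMeasurable intC0 h1Aint hc1A
    filter_upwards [heB, hEDY, h0, hsplit, hsplit2, hC1, hC0] with ω hB hy hω hs hs2 c1 c0
    have he0 : e ω ≠ 0 := ne_of_gt hB.1
    have he1 : (1 : ℝ) - e ω ≠ 0 := ne_of_gt (by linarith [hB.2])
    rw [hω, hs, Pi.sub_apply, hy, hs2, Pi.sub_apply, c1, c0,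
      inv_mul_cancel_right₀ he0, inv_mul_cancel_right₀ he1]
    ring
  -- conditional second moment difference
  have hDsq : ∀ᵐ ω ∂μ, (μ[(fun ω' => DY ω' ^ 2)|G]) ω - (μ[(fun ω' => DR ω' ^ 2)|G]) ω
      = μ1 ω ^ 2 / e ω + μ0 ω ^ 2 / (1 - e ω) := by
    have hsub : μ[(fun ω => DY ω ^ 2 - DR ω ^ 2)|G]
        =ᵐ[μ] μ[(fun ω' => DY ω' ^ 2)|G] - μ[(fun ω' => DR ω' ^ 2)|G] :=
      condExp_sub hDY2.integrable_sq hDR2.integrable_sq G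
    have hcong : μ[(fun ω => DY ω ^ 2 - DR ω ^ 2)|G]
        =ᵐ[μ] μ[(fun ω => (2 * μ1 ω * (e ω ^ 2)⁻¹ * (A ω * Y ω)
            - μ1 ω ^ 2 * (e ω ^ 2)⁻¹ * A ω)
          + (2 * μ0 ω * ((1 - e ω) ^ 2)⁻¹ * ((1 - A ω) * Y ω)
            - μ0 ω ^ 2 * ((1 - e ω) ^ 2)⁻¹ * (1 - A ω)))|G] :=
      condExp_congr_ae (Eventually.of_forall fun ω => by
        rcases hA01 ω with h | h <;> simp only [hDY, hDR, h, ← inv_pow] <;> ring)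
    have hadd : μ[(fun ω => (2 * μ1 ω * (e ω ^ 2)⁻¹ * (A ω * Y ω)
            - μ1 ω ^ 2 * (e ω ^ 2)⁻¹ * A ω)
          + (2 * μ0 ω * ((1 - e ω) ^ 2)⁻¹ * ((1 - A ω) * Y ω)
            - μ0 ω ^ 2 * ((1 - e ω) ^ 2)⁻¹ * (1 - A ω)))|G]
        =ᵐ[μ] μ[(fun ω => 2 * μ1 ω * (e ω ^ 2)⁻¹ * (A ω * Y ω)
            - μ1 ω ^ 2 * (e ω ^ 2)⁻¹ * A ω)|G]
          + μ[(fun ω => 2 * μ0 ω * ((1 - e ω) ^ 2)⁻¹ * ((1 - A ω) * Y ω)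
            - μ0 ω ^ 2 * ((1 - e ω) ^ 2)⁻¹ * (1 - A ω))|G] :=
      condExp_add (int1.sub int2) (int3.sub int4) G
    have hs1 : μ[(fun ω => 2 * μ1 ω * (e ω ^ 2)⁻¹ * (A ω * Y ω)
            - μ1 ω ^ 2 * (e ω ^ 2)⁻¹ * A ω)|G]
        =ᵐ[μ] μ[(fun ω => 2 * μ1 ω * (e ω ^ 2)⁻¹ * (A ω * Y ω))|G]
          - μ[(fun ω => μ1 ω ^ 2 * (e ω ^ 2)⁻¹ * A ω)|G] :=
      condExp_sub int1 int2 G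
    have hs0 : μ[(fun ω => 2 * μ0 ω * ((1 - e ω) ^ 2)⁻¹ * ((1 - A ω) * Y ω)
            - μ0 ω ^ 2 * ((1 - e ω) ^ 2)⁻¹ * (1 - A ω))|G]
        =ᵐ[μ] μ[(fun ω => 2 * μ0 ω * ((1 - e ω) ^ 2)⁻¹ * ((1 - A ω) * Y ω))|G]
          - μ[(fun ω => μ0 ω ^ 2 * ((1 - e ω) ^ 2)⁻¹ * (1 - A ω))|G] :=
      condExp_sub int3 int4 G
    have hT1 := pullout (μ := μ) (fun ω => 2 * μ1 ω * (e ω ^ 2)⁻¹) (fun ω => A ω * Y ω) _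
      ((measurable_const.mul m1).mul (me.pow_const 2).inv).stronglyMeasurable int1 hAY hmean1
    have hT2 := pullout (μ := μ) (fun ω => μ1 ω ^ 2 * (e ω ^ 2)⁻¹) A _
      (((m1.pow_const 2).mul (me.pow_const 2).inv)).stronglyMeasurable int2 hAint hcondA
    have hT3 := pullout (μ := μ) (fun ω => 2 * μ0 ω * ((1 - e ω) ^ 2)⁻¹)
      (fun ω => (1 - A ω) * Y ω) _
      ((measurable_const.mul m0').mul (((measurable_const.sub me).pow_const 2).inv)).stronglyMeasurable
      int3 h1AY hmean0
    have hT4 := pullout (μ := μ) (fun ω => μ0 ω ^ 2 * ((1 - e ω) ^ 2)⁻¹) (fun ω => 1 - A ω) _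
      ((m0'.pow_const 2).mul (((measurable_const.sub me).pow_const 2).inv)).stronglyMeasurable
      int4 h1Aint hc1A
    filter_upwards [heB, hsub, hcong, hadd, hs1, hs0, hT1, hT2, hT3, hT4]
      with ω hB hsubω hcongω haddω hs1ω hs0ω t1 t2 t3 t4
    have he0 : e ω ≠ 0 := ne_of_gt hB.1
    have he1 : (1 : ℝ) - e ω ≠ 0 := ne_of_gt (by linarith [hB.2])
    rw [Pi.sub_apply] at hsubω
    rw [Pi.add_apply] at haddω
    rw [Pi.sub_apply] at hs1ω hs0ω
    rw [← hsubω, hcongω, haddω, hs1ω, hs0ω, t1, t2, t3, t4]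
    field_simp
    ring
  -- final assembly
  filter_upwards [heB, hEDY, hEDR, hDsq] with ω hB hy hr hd
  have he0 : e ω ≠ 0 := ne_of_gt hB.1
  have he1 : (1 : ℝ) - e ω ≠ 0 := ne_of_gt (by linarith [hB.2])
  have key : (Real.sqrt ((1 - e ω) / e ω) * μ1 ω + Real.sqrt (e ω / (1 - e ω)) * μ0 ω) ^ 2
      = μ1 ω ^ 2 / e ω + μ0 ω ^ 2 / (1 - e ω) - (μ1 ω - μ0 ω) ^ 2 := by
    have ha : Real.sqrt ((1 - e ω) / e ω) ^ 2 = (1 - e ω) / e ω :=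
      Real.sq_sqrt (div_nonneg (by linarith [hB.2]) hB.1.le)
    have hb : Real.sqrt (e ω / (1 - e ω)) ^ 2 = e ω / (1 - e ω) :=
      Real.sq_sqrt (div_nonneg hB.1.le (by linarith [hB.2]))
    have hab : Real.sqrt ((1 - e ω) / e ω) * Real.sqrt (e ω / (1 - e ω)) = 1 := by
      rw [← Real.sqrt_mul (div_nonneg (by linarith [hB.2]) hB.1.le)]
      rw [show (1 - e ω) / e ω * (e ω / (1 - e ω)) = 1 by field_simp]
      exact Real.sqrt_one
    calc (Real.sqrt ((1 - e ω) / e ω) * μ1 ω + Real.sqrt (e ω / (1 - e ω)) * μ0 ω) ^ 2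
        = Real.sqrt ((1 - e ω) / e ω) ^ 2 * μ1 ω ^ 2
          + 2 * (Real.sqrt ((1 - e ω) / e ω) * Real.sqrt (e ω / (1 - e ω))) * (μ1 ω * μ0 ω)
          + Real.sqrt (e ω / (1 - e ω)) ^ 2 * μ0 ω ^ 2 := by ring
      _ = μ1 ω ^ 2 / e ω + μ0 ω ^ 2 / (1 - e ω) - (μ1 ω - μ0 ω) ^ 2 := by
          rw [ha, hb, hab]; field_simp; ring
  rw [hy, hr]
  constructor
  · linarith [key, hd]
  · linarith [key, hd, sq_nonneg (Real.sqrt ((1 - e ω) / e ω) * μ1 ω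
      + Real.sqrt (e ω / (1 - e ω)) * μ0 ω)]
end
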